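/- A G-valued random variable X satisfies H(X_1+X_2) = H(X) for independent copies X_1, X_2 of X if and only if X is uniformly distributed on a coset of some finite subgroup of G. -/

import Mathlib

open Real
open scoped BigOperators Pointwise Classical

/-- A finitely supported probability space. -/
structure FinProb (Ω : Type*) [Fintype Ω] where
  p : Ω → ℝ
  nonneg : ∀ ω, 0 ≤ p ω
  sum_one : ∑ ω, p ω = 1

/-- Probability that the random variable `X` takes the value `s`. -/
noncomputable def prob {Ω S : Type*} [Fintype Ω] (μ : FinProb Ω) (X : Ω → S) (s : S) : ℝ :=
  ∑ ω, if X ω = s then μ.p ω else 0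

/-- Shannon entropy of a discrete random variable. -/
noncomputable def entropy {Ω S : Type*} [Fintype Ω] (μ : FinProb Ω) (X : Ω → S) : ℝ :=
  ∑ s ∈ Finset.univ.image X, Real.negMulLog (prob μ X s)

/-- Conditional Shannon entropy `H(X|Y) = H(X,Y) - H(Y)`. -/
noncomputable def condEntropy {Ω S T : Type*} [Fintype Ω] (μ : FinProb Ω)
    (X : Ω → S) (Y : Ω → T) : ℝ :=
  entropy μ (fun ω => (X ω, Y ω)) - entropy μ Y

/-- The essential range of a random variable: values attained with positive probability. -/
noncomputable def rangeF {Ω S : Type*} [Fintype Ω] (μ : FinProb Ω) (X : Ω → S) : Finset S :=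
  (Finset.univ.image X).filter (fun s => prob μ X s ≠ 0)

/-- Two random variables (on possibly different spaces) have the same distribution. -/
def IdentDist {Ω Ω' S : Type*} [Fintype Ω] [Fintype Ω'] (μ : FinProb Ω) (X : Ω → S)
    (μ' : FinProb Ω') (Y : Ω' → S) : Prop :=
  ∀ s, prob μ X s = prob μ' Y s

/-- Independence of two random variables. -/
def IndepRV {Ω S T : Type*} [Fintype Ω] (μ : FinProb Ω) (X : Ω → S) (Y : Ω → T) : Prop :=
  ∀ s t, prob μ (fun ω => (X ω, Y ω)) (s, t) = prob μ X s * prob μ Y t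

/-- Joint independence of a finite family of random variables. -/
def IndepFam {Ω ι : Type*} [Fintype Ω] [Fintype ι] {S : ι → Type*}
    (μ : FinProb Ω) (X : ∀ i, Ω → S i) : Prop :=
  ∀ f : ∀ i, S i, prob μ (fun ω i => X i ω) f = ∏ i, prob μ (X i) (f i)

/-- `X` and `Y` are conditionally independent given `W`. -/
def CondIndepGiven {Ω S T U : Type*} [Fintype Ω] (μ : FinProb Ω)
    (X : Ω → S) (Y : Ω → T) (W : Ω → U) : Prop :=
  ∀ s t u, prob μ (fun ω => (X ω, Y ω, W ω)) (s, t, u) * prob μ W u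
    = prob μ (fun ω => (X ω, W ω)) (s, u) * prob μ (fun ω => (Y ω, W ω)) (t, u)

/-- `Y` is determined by `X` (almost surely). -/
def Determines {Ω S T : Type*} [Fintype Ω] (μ : FinProb Ω) (X : Ω → S) (Y : Ω → T) : Prop :=
  ∃ f : S → T, ∀ ω, μ.p ω ≠ 0 → Y ω = f (X ω)

/-- The entropy transport distance between the distributions of `X` and `Y`:
the infimum of `H(Z)` over random variables `Z` (coupled with a copy `X'` of `X`)
such that `X' + Z` is distributed as `Y`. -/
noncomputable def transDist {Ω₁ Ω₂ G : Type*} [Fintype Ω₁] [Fintype Ω₂] [AddCommGroup G]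
    (μ : FinProb Ω₁) (X : Ω₁ → G) (ν : FinProb Ω₂) (Y : Ω₂ → G) : ℝ :=
  sInf {h : ℝ | ∃ (n : ℕ) (μ' : FinProb (Fin n)) (X' Z : Fin n → G),
    IdentDist μ' X' μ X ∧ IdentDist μ' (fun ω => X' ω + Z ω) ν Y ∧ entropy μ' Z = h}

/-- Conditioning a finitely supported probability space on an event `E`
(returning `μ` unchanged if `E` has zero probability). -/
noncomputable def condFinProb {Ω : Type*} [Fintype Ω] (μ : FinProb Ω) (E : Ω → Prop) :
    FinProb Ω :=
  if h : 0 < ∑ ω, if E ω then μ.p ω else 0 then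
    { p := fun ω => if E ω then μ.p ω / (∑ ω', if E ω' then μ.p ω' else 0) else 0
      nonneg := fun ω => by
        split
        · exact div_nonneg (μ.nonneg ω) h.le
        · exact le_refl 0
      sum_one := by
        have h' : ∀ ω, (if E ω then μ.p ω / (∑ ω', if E ω' then μ.p ω' else 0) else 0)
            = (if E ω then μ.p ω else 0) / (∑ ω', if E ω' then μ.p ω' else 0) := by
          intro ω; split <;> simp
        rw [Finset.sum_congr rfl (fun ω _ => h' ω), ← Finset.sum_div, div_self h.ne'] }
  else μ
/-!
Let `p` be the law of `X`, supported on `A`, and `q = p * p` the law of `X₁ + X₂`. Writing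
`klFun x = x log x + 1 - x ≥ 0` (zero only at `x = 1`), one has the exact identity
`H(q) - H(p) = ∑_{a ∈ A} p(a) ∑_{s ∈ A + A} q(s) klFun (p(s - a) / q(s))`,
so `H(q) = H(p)` iff every translate `a + X`, `a ∈ A`, has law `q`. Taking `s = a + b` gives
`p(a) = q(a + b) = p(b)`, so `p` is uniform on `A`, and `p(a + b - d) = q(a + b) > 0`, so `A` is
closed under `(a, b, d) ↦ a + b - d`, i.e. `A` is a coset. Conversely the uniform law on a coset
satisfies all these equalities.
-/

open Real InformationTheory

section Prob

variable {Ω Ω' S : Type*} [Fintype Ω] [Fintype Ω']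

lemma prob_nonneg (μ : FinProb Ω) (X : Ω → S) (s : S) : 0 ≤ prob μ X s :=
  Finset.sum_nonneg fun ω _ => by split_ifs <;> simp [μ.nonneg ω]

lemma mem_rangeF_iff {μ : FinProb Ω} {X : Ω → S} {s : S} :
    s ∈ rangeF μ X ↔ prob μ X s ≠ 0 := by
  refine ⟨fun h => (Finset.mem_filter.1 h).2, fun h => Finset.mem_filter.2 ⟨?_, h⟩⟩
  obtain ⟨ω, -, hω⟩ := Finset.exists_ne_zero_of_sum_ne_zero h
  exact Finset.mem_image.2 ⟨ω, Finset.mem_univ ω, by_contra fun hne => hω (if_neg hne)⟩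

lemma sum_rangeF_prob (μ : FinProb Ω) (X : Ω → S) : ∑ s ∈ rangeF μ X, prob μ X s = 1 := by
  rw [rangeF, Finset.sum_filter_ne_zero]
  unfold prob
  rw [Finset.sum_comm, ← μ.sum_one]
  refine Finset.sum_congr rfl fun ω _ => ?_
  rw [Finset.sum_ite_eq, if_pos (Finset.mem_image_of_mem X (Finset.mem_univ ω))]

lemma entropy_eq_sum {μ : FinProb Ω} {X : Ω → S} {C : Finset S} (hC : rangeF μ X ⊆ C) :
    entropy μ X = ∑ s ∈ C, negMulLog (prob μ X s) := by
  have vanish : ∀ s ∉ rangeF μ X, negMulLog (prob μ X s) = 0 := fun s hs => by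
    rw [not_not.1 (mt mem_rangeF_iff.2 hs), negMulLog_zero]
  calc entropy μ X = ∑ s ∈ rangeF μ X, negMulLog (prob μ X s) :=
        (Finset.sum_subset (Finset.filter_subset _ _) fun s _ => vanish s).symm
    _ = ∑ s ∈ C, negMulLog (prob μ X s) := Finset.sum_subset hC fun s _ => vanish s

lemma IdentDist.rangeF_eq {μ : FinProb Ω} {X : Ω → S} {μ' : FinProb Ω'} {Y : Ω' → S}
    (h : IdentDist μ X μ' Y) : rangeF μ X = rangeF μ' Y := by
  ext s
  rw [mem_rangeF_iff, mem_rangeF_iff, h s]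

lemma prob_eq_sum_prob_prod (μ : FinProb Ω) {T : Type*} (Y : Ω → T) (X : Ω → S) (s : S) :
    prob μ X s = ∑ t ∈ Finset.univ.image Y, prob μ (fun ω => (Y ω, X ω)) (t, s) := by
  unfold prob
  rw [Finset.sum_comm]
  refine Finset.sum_congr rfl fun ω _ => ?_
  simp only [Prod.mk.injEq, ite_and]
  rw [Finset.sum_ite_eq, if_pos (Finset.mem_image_of_mem Y (Finset.mem_univ ω))]

variable {G : Type*} [AddCommGroup G]

lemma IndepRV.prob_add {μ : FinProb Ω} {X₁ X₂ : Ω → G} (h : IndepRV μ X₁ X₂) (s : G) :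
    prob μ (fun ω => X₁ ω + X₂ ω) s
      = ∑ a ∈ rangeF μ X₁, prob μ X₁ a * prob μ X₂ (s - a) := by
  have hprod : ∀ a, prob μ (fun ω => (X₁ ω, X₁ ω + X₂ ω)) (a, s)
      = prob μ X₁ a * prob μ X₂ (s - a) := fun a => by
    rw [← h]
    unfold prob
    simp only [Prod.mk.injEq, eq_sub_iff_add_eq']
    refine Finset.sum_congr rfl fun ω _ => if_congr (and_congr_right fun h => ?_) rfl rfl
    rw [h]
  rw [prob_eq_sum_prob_prod μ X₁, Finset.sum_congr rfl fun a _ => hprod a]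
  refine (Finset.sum_subset (Finset.filter_subset _ _) fun a _ ha => ?_).symm
  rw [not_not.1 (mt mem_rangeF_iff.2 ha), zero_mul]

end Prob

lemma mul_klFun_div (r : ℝ) {q : ℝ} (hq : q ≠ 0) :
    q * klFun (r / q) = r * log r - r * log q + q - r := by
  rw [klFun_apply]
  by_cases hr : r = 0
  · simp [hr]
  · rw [log_div hr hq]
    field_simp

structure IsFinDistOn {α : Type*} (A : Finset α) (p : α → ℝ) : Prop where
  pos : ∀ a ∈ A, 0 < p a
  eq_zero : ∀ a ∉ A, p a = 0
  sum_eq_one : ∑ a ∈ A, p a = 1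

lemma isFinDistOn_rangeF {Ω S : Type*} [Fintype Ω] (μ : FinProb Ω) (X : Ω → S) :
    IsFinDistOn (rangeF μ X) (prob μ X) where
  pos _ hs := (prob_nonneg μ X _).lt_of_ne' (mem_rangeF_iff.1 hs)
  eq_zero _ hs := not_not.1 (mt mem_rangeF_iff.2 hs)
  sum_eq_one := sum_rangeF_prob μ X

namespace IsFinDistOn

variable {α : Type*} {A : Finset α} {p : α → ℝ}

lemma nonneg (hp : IsFinDistOn A p) (x : α) : 0 ≤ p x := by
  by_cases hx : x ∈ A
  · exact (hp.pos x hx).le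
  · exact (hp.eq_zero x hx).ge

lemma nonempty (hp : IsFinDistOn A p) : A.Nonempty := by
  by_contra hA
  simpa [Finset.not_nonempty_iff_eq_empty.1 hA] using hp.sum_eq_one

lemma eq_inv_card_of_forall_eq (hp : IsFinDistOn A p) (hconst : ∀ a ∈ A, ∀ b ∈ A, p a = p b)
    {a : α} (ha : a ∈ A) : p a = (A.card : ℝ)⁻¹ := by
  refine eq_inv_of_mul_eq_one_right ?_
  rw [← hp.sum_eq_one, Finset.sum_congr rfl fun b hb => hconst b hb a ha, Finset.sum_const,
    nsmul_eq_mul]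

lemma forall_eq_ite_iff (hp : IsFinDistOn A p) (S : Finset α) :
    (∀ g, p g = if g ∈ S then (S.card : ℝ)⁻¹ else 0) ↔
      S = A ∧ ∀ a ∈ A, p a = (A.card : ℝ)⁻¹ := by
  constructor
  · intro hS
    have hSA : S = A := by
      ext g
      refine ⟨fun hg => by_contra fun hgA => ?_, fun hg => by_contra fun hgS => ?_⟩
      · have := hp.eq_zero g hgA
        rw [hS, if_pos hg, inv_eq_zero, Nat.cast_eq_zero, Finset.card_eq_zero] at this
        simp [this] at hg
      · exact (hp.pos g hg).ne' (by rw [hS, if_neg hgS])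
    subst hSA
    exact ⟨rfl, fun a ha => by rw [hS, if_pos ha]⟩
  · rintro ⟨rfl, hunif⟩ g
    split_ifs with hg
    · exact hunif g hg
    · exact hp.eq_zero g hg

end IsFinDistOn

section AddCommGroup

variable {G : Type*} [AddCommGroup G]

lemma exists_eq_vadd_addSubgroup_iff {A : Set G} (hA : A.Nonempty) :
    (∃ (H : AddSubgroup G) (c : G), A = c +ᵥ (H : Set G)) ↔
      ∀ a ∈ A, ∀ b ∈ A, ∀ d ∈ A, a + b - d ∈ A := by
  constructor
  · rintro ⟨H, c, rfl⟩ _ ⟨x, hx, rfl⟩ _ ⟨y, hy, rfl⟩ _ ⟨z, hz, rfl⟩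
    refine ⟨x + y - z, H.sub_mem (H.add_mem hx hy) hz, ?_⟩
    simp only [vadd_eq_add]
    abel
  · intro hA_closed
    obtain ⟨c, hc⟩ := hA
    have mem_iff : ∀ x, x ∈ -c +ᵥ A ↔ c + x ∈ A := fun x => by
      rw [Set.mem_vadd_set_iff_neg_vadd_mem, neg_neg, vadd_eq_add]
    have hzero : (0 : G) ∈ -c +ᵥ A := (mem_iff 0).2 (by rwa [add_zero])
    refine ⟨AddSubgroup.ofSub (-c +ᵥ A) ⟨0, hzero⟩ fun x hx y hy => ?_, c,
      (vadd_neg_vadd c A).symm⟩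
    rw [mem_iff] at hx hy ⊢
    convert hA_closed _ hx _ hc _ hy using 1
    abel

lemma Finset.sum_add_comp_sub {M : Type*} [AddCommMonoid M] {A B : Finset G} {a : G}
    (hB : ∀ b ∈ A, a + b ∈ B) (f : G → M)
    (hf : ∀ x ∉ A, f x = 0) : ∑ s ∈ B, f (s - a) = ∑ b ∈ A, f b := by
  calc ∑ s ∈ B, f (s - a) = ∑ s ∈ A.image (a + ·), f (s - a) := by
        refine (Finset.sum_subset (fun s hs => ?_) fun s _ hs => hf _ fun hA => hs ?_).symm
        · obtain ⟨b, hb, rfl⟩ := Finset.mem_image.1 hs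
          exact hB b hb
        · exact Finset.mem_image.2 ⟨s - a, hA, add_sub_cancel a s⟩
    _ = ∑ b ∈ A, f b := by
        rw [Finset.sum_image fun x _ y _ h => add_left_cancel h]
        simp only [add_sub_cancel_left]

noncomputable def selfConv (A : Finset G) (p : G → ℝ) (s : G) : ℝ :=
  ∑ a ∈ A, p a * p (s - a)

namespace IsFinDistOn

variable {A : Finset G} {p : G → ℝ}

lemma sum_comp_sub (hp : IsFinDistOn A p) {a : G} (ha : a ∈ A) :
    ∑ s ∈ A + A, p (s - a) = 1 := by
  rw [Finset.sum_add_comp_sub (fun b hb => Finset.add_mem_add ha hb) p hp.eq_zero, hp.sum_eq_one]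

lemma selfConv_pos (hp : IsFinDistOn A p) {s : G} (hs : s ∈ A + A) : 0 < selfConv A p s := by
  obtain ⟨a, ha, b, hb, rfl⟩ := Finset.mem_add.1 hs
  refine Finset.sum_pos' (fun c _ => mul_nonneg (hp.nonneg c) (hp.nonneg _)) ⟨a, ha, ?_⟩
  rw [add_sub_cancel_left]
  exact mul_pos (hp.pos a ha) (hp.pos b hb)

lemma selfConv_eq_zero (hp : IsFinDistOn A p) {s : G} (hs : s ∉ A + A) : selfConv A p s = 0 := by
  refine Finset.sum_eq_zero fun a ha => ?_
  rw [hp.eq_zero (s - a) fun h => hs ?_, mul_zero]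
  simpa using Finset.add_mem_add ha h

lemma sum_selfConv (hp : IsFinDistOn A p) : ∑ s ∈ A + A, selfConv A p s = 1 := by
  unfold selfConv
  rw [Finset.sum_comm, ← hp.sum_eq_one]
  refine Finset.sum_congr rfl fun a ha => ?_
  rw [← Finset.mul_sum, hp.sum_comp_sub ha, mul_one]

lemma sum_mul_sum_mul_klFun (hp : IsFinDistOn A p) :
    ∑ a ∈ A, p a * ∑ s ∈ A + A, selfConv A p s * klFun (p (s - a) / selfConv A p s)
      = ∑ s ∈ A + A, negMulLog (selfConv A p s) - ∑ a ∈ A, negMulLog (p a) := by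
  set q := selfConv A p
  have inner : ∀ a ∈ A, ∑ s ∈ A + A, q s * klFun (p (s - a) / q s)
      = ∑ b ∈ A, p b * log (p b) - ∑ s ∈ A + A, p (s - a) * log (q s) := fun a ha => by
    rw [Finset.sum_congr rfl fun s hs => mul_klFun_div _ (hp.selfConv_pos hs).ne',
      Finset.sum_sub_distrib, Finset.sum_add_distrib, Finset.sum_sub_distrib, hp.sum_selfConv,
      hp.sum_comp_sub ha, Finset.sum_add_comp_sub (fun b hb => Finset.add_mem_add ha hb)
        (fun x => p x * log (p x)) fun x hx => by simp [hp.eq_zero x hx]]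
    ring
  calc ∑ a ∈ A, p a * ∑ s ∈ A + A, q s * klFun (p (s - a) / q s)
      = ∑ a ∈ A, p a * (∑ b ∈ A, p b * log (p b) - ∑ s ∈ A + A, p (s - a) * log (q s)) :=
        Finset.sum_congr rfl fun a ha => by rw [inner a ha]
    _ = (∑ a ∈ A, p a) * ∑ b ∈ A, p b * log (p b) - ∑ s ∈ A + A, q s * log (q s) := by
        simp only [mul_sub, Finset.sum_sub_distrib, q, selfConv, Finset.sum_mul, Finset.mul_sum,
          mul_assoc]
        rw [Finset.sum_comm (s := A + A)]
        congr 1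
        exact Finset.sum_comm
    _ = ∑ s ∈ A + A, negMulLog (q s) - ∑ a ∈ A, negMulLog (p a) := by
        simp only [negMulLog, hp.sum_eq_one, neg_mul, Finset.sum_neg_distrib]
        ring

lemma sum_negMulLog_selfConv_eq_iff (hp : IsFinDistOn A p) :
    ∑ s ∈ A + A, negMulLog (selfConv A p s) = ∑ a ∈ A, negMulLog (p a) ↔
      ∀ a ∈ A, ∀ s ∈ A + A, p (s - a) = selfConv A p s := by
  have term_nonneg : ∀ a ∈ A, ∀ s ∈ A + A,
      0 ≤ selfConv A p s * klFun (p (s - a) / selfConv A p s) := fun a _ s hs =>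
    mul_nonneg (hp.selfConv_pos hs).le
      (klFun_nonneg (div_nonneg (hp.nonneg _) (hp.selfConv_pos hs).le))
  rw [← sub_eq_zero, ← hp.sum_mul_sum_mul_klFun, Finset.sum_eq_zero_iff_of_nonneg fun a ha =>
    mul_nonneg (hp.nonneg a) (Finset.sum_nonneg (term_nonneg a ha))]
  refine forall₂_congr fun a ha => ?_
  rw [mul_eq_zero, or_iff_right (hp.pos a ha).ne',
    Finset.sum_eq_zero_iff_of_nonneg (term_nonneg a ha)]
  refine forall₂_congr fun s hs => ?_
  rw [mul_eq_zero, or_iff_right (hp.selfConv_pos hs).ne',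
    klFun_eq_zero_iff (div_nonneg (hp.nonneg _) (hp.selfConv_pos hs).le),
    div_eq_one_iff_eq (hp.selfConv_pos hs).ne']

lemma forall_sub_eq_selfConv_iff (hp : IsFinDistOn A p) :
    (∀ a ∈ A, ∀ s ∈ A + A, p (s - a) = selfConv A p s) ↔
      (∀ a ∈ A, ∀ b ∈ A, ∀ d ∈ A, a + b - d ∈ A) ∧ ∀ a ∈ A, p a = (A.card : ℝ)⁻¹ := by
  constructor
  · intro h
    refine ⟨fun a ha b hb d hd => by_contra fun hn => ?_, fun a ha => ?_⟩
    · have hab := Finset.add_mem_add ha hb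
      exact (hp.selfConv_pos hab).ne' (by rw [← h d hd _ hab, hp.eq_zero _ hn])
    · refine hp.eq_inv_card_of_forall_eq (fun a ha b hb => ?_) ha
      have hab := Finset.add_mem_add ha hb
      rw [← add_sub_cancel_right a b, h b hb _ hab, ← h a ha _ hab, add_sub_cancel_left]
  · rintro ⟨hclosed, hunif⟩ a ha s hs
    obtain ⟨b, hb, d, hd, rfl⟩ := Finset.mem_add.1 hs
    have hcard : (A.card : ℝ) ≠ 0 := by exact_mod_cast (Finset.card_pos.2 ⟨a, ha⟩).ne'
    rw [hunif _ (hclosed b hb d hd a ha), selfConv,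
      Finset.sum_congr rfl fun c hc => by rw [hunif c hc, hunif _ (hclosed b hb d hd c hc)],
      Finset.sum_const, nsmul_eq_mul, ← mul_assoc, mul_inv_cancel₀ hcard, one_mul]

end IsFinDistOn

end AddCommGroup

/-- `H(X₁ + X₂) = H(X)` for independent copies `X₁, X₂` of `X` if and only if
`X` is uniformly distributed on a coset `c + H` of some finite subgroup `H` of `G`. -/
theorem doubling_eq_one_iff_uniform_on_coset {G Ω Ω' : Type*} [AddCommGroup G]
    [Fintype Ω] [Fintype Ω'] (μ : FinProb Ω) (X : Ω → G)
    (μ' : FinProb Ω') (X₁ X₂ : Ω' → G)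
    (h₁ : IdentDist μ' X₁ μ X) (h₂ : IdentDist μ' X₂ μ X) (hindep : IndepRV μ' X₁ X₂) :
    entropy μ' (fun ω => X₁ ω + X₂ ω) = entropy μ X ↔
      ∃ (H : AddSubgroup G) (c : G) (S : Finset G),
        (S : Set G) = c +ᵥ (H : Set G) ∧
        ∀ g : G, prob μ X g = if g ∈ S then ((S.card : ℝ))⁻¹ else 0 := by
  set A := rangeF μ X
  have hp : IsFinDistOn A (prob μ X) := isFinDistOn_rangeF μ X
  have hconv : ∀ s, prob μ' (fun ω => X₁ ω + X₂ ω) s = selfConv A (prob μ X) s := fun s => by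
    rw [hindep.prob_add, h₁.rangeF_eq]
    exact Finset.sum_congr rfl fun a _ => by rw [h₁ a, h₂ (s - a)]
  have hsupp : rangeF μ' (fun ω => X₁ ω + X₂ ω) ⊆ A + A := fun s hs =>
    by_contra fun hn => mem_rangeF_iff.1 hs (by rw [hconv, hp.selfConv_eq_zero hn])
  rw [entropy_eq_sum hsupp, entropy_eq_sum subset_rfl]
  simp only [hconv]
  rw [hp.sum_negMulLog_selfConv_eq_iff, hp.forall_sub_eq_selfConv_iff]
  have hcoset := exists_eq_vadd_addSubgroup_iff (Finset.coe_nonempty.2 hp.nonempty)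
  simp only [Finset.mem_coe] at hcoset
  rw [← hcoset]
  constructor
  · rintro ⟨⟨H, c, hHc⟩, hunif⟩
    exact ⟨H, c, A, hHc, (hp.forall_eq_ite_iff A).2 ⟨rfl, hunif⟩⟩
  · rintro ⟨H, c, S, hHc, hS⟩
    obtain ⟨rfl, hunif⟩ := (hp.forall_eq_ite_iff S).1 hS
    exact ⟨⟨H, c, hHc⟩, hunif⟩
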